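/- arXiv:0710.1544 — 3 statements merged into one kernel-verified Lean document; each statement's English description precedes it below -/
import Mathlib

section
/- Let A be a supercommutative ring, a an invertible even element, b an even element, β an odd element. Define the affine transformation G(x,ξ) = (a²x + a²b − a²βξ, aβ + aξ). Then for any three points tᵢ = (xᵢ,ξᵢ) (xᵢ even, ξᵢ odd, i = 1,2,3), with [tᵢ,tⱼ] = xⱼ − xᵢ − ξⱼξᵢ, one has [G(t₁),G(t₃)]·[t₁,t₂] = [G(t₁),G(t₂)]·[t₁,t₃]. In particular [G(tᵢ),G(tⱼ)] = a²[tᵢ,tⱼ]. -/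
/-!
Since `a` is even, hence central, the odd part `a(β + ξ)` of `G` contributes
`a²(β + ξ₂)(β + ξ₁) = a²(βξ₁ − βξ₂ + ξ₂ξ₁)` to `[G t₁, G t₂]` (using `β² = 0` and `ξ₂β = −βξ₂`),
whose first two terms cancel the shift `−a²βξ` of the even part, leaving `a²[t₁, t₂]`.
The multiplicative identity then only needs that the even brackets commute.
-/

/-- A supercommutative ring structure on a ring `A`: a choice of even and odd
elements such that even elements are central, odd elements pairwise
anticommute and square to zero, with the expected closure properties of the
`ℤ/2`-grading. -/
structure SuperComm (A : Type*) [Ring A] where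
  Ev : A → Prop
  Od : A → Prop
  ev_central : ∀ a, Ev a → ∀ z, a * z = z * a
  od_anticomm : ∀ a b, Od a → Od b → a * b = -(b * a)
  od_sq : ∀ a, Od a → a * a = 0
  ev_add : ∀ a b, Ev a → Ev b → Ev (a + b)
  od_add : ∀ a b, Od a → Od b → Od (a + b)
  ev_neg : ∀ a, Ev a → Ev (-a)
  od_neg : ∀ a, Od a → Od (-a)
  ev_one : Ev 1
  ev_mul_ev : ∀ a b, Ev a → Ev b → Ev (a * b)
  od_mul_od : ∀ a b, Od a → Od b → Ev (a * b)
  ev_mul_od : ∀ a b, Ev a → Od b → Od (a * b)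

section

variable {A : Type*} [Ring A]

def superBracket (s t : A × A) : A := t.1 - s.1 - t.2 * s.2

def superAffine (a b β : A) (t : A × A) : A × A :=
  (a ^ 2 * t.1 + a ^ 2 * b - a ^ 2 * β * t.2, a * β + a * t.2)

end

namespace SuperComm

variable {A : Type*} [Ring A] (sc : SuperComm A)

theorem ev_sub {u v : A} (hu : sc.Ev u) (hv : sc.Ev v) : sc.Ev (u - v) := by
  rw [sub_eq_add_neg]
  exact sc.ev_add _ _ hu (sc.ev_neg _ hv)

theorem ev_superBracket {s t : A × A} (hs₁ : sc.Ev s.1) (hs₂ : sc.Od s.2) (ht₁ : sc.Ev t.1)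
    (ht₂ : sc.Od t.2) : sc.Ev (superBracket s t) :=
  sc.ev_sub (sc.ev_sub ht₁ hs₁) (sc.od_mul_od _ _ ht₂ hs₂)

theorem mul_mul_mul_eq_sq_mul_of_ev {a : A} (ha : sc.Ev a) (u v : A) :
    a * u * (a * v) = a ^ 2 * (u * v) := by
  rw [mul_assoc, ← mul_assoc u, ← sc.ev_central a ha u]
  noncomm_ring

theorem superBracket_superAffine {a β : A} (b : A) (ha : sc.Ev a) (hβ : sc.Od β) (s t : A × A)
    (ht : sc.Od t.2) :
    superBracket (superAffine a b β s) (superAffine a b β t) = a ^ 2 * superBracket s t := by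
  have hodd : (a * β + a * t.2) * (a * β + a * s.2)
      = a ^ 2 * (β * s.2 - β * t.2 + t.2 * s.2) := by
    simp only [add_mul, mul_add, sc.mul_mul_mul_eq_sq_mul_of_ev ha, sc.od_sq β hβ,
      sc.od_anticomm t.2 β ht hβ]
    noncomm_ring
  simp only [superBracket, superAffine, hodd]
  noncomm_ring

end SuperComm

theorem super_affine_invariance_general
    {A : Type*} [Ring A] (sc : SuperComm A)
    (a b β x₁ ξ₁ x₂ ξ₂ x₃ ξ₃ : A)
    (ha : sc.Ev a) (hβ : sc.Od β)
    (hx₁ : sc.Ev x₁) (hξ₁ : sc.Od ξ₁)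
    (hx₂ : sc.Ev x₂) (hξ₂ : sc.Od ξ₂)
    (hξ₃ : sc.Od ξ₃) :
    (((a^2*x₃ + a^2*b - a^2*β*ξ₃) - (a^2*x₁ + a^2*b - a^2*β*ξ₁)
        - (a*β + a*ξ₃) * (a*β + a*ξ₁)) * (x₂ - x₁ - ξ₂*ξ₁)
      = ((a^2*x₂ + a^2*b - a^2*β*ξ₂) - (a^2*x₁ + a^2*b - a^2*β*ξ₁)
        - (a*β + a*ξ₂) * (a*β + a*ξ₁)) * (x₃ - x₁ - ξ₃*ξ₁))
    ∧ ((a^2*x₂ + a^2*b - a^2*β*ξ₂) - (a^2*x₁ + a^2*b - a^2*β*ξ₁)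
        - (a*β + a*ξ₂) * (a*β + a*ξ₁) = a^2 * (x₂ - x₁ - ξ₂*ξ₁))
    ∧ ((a^2*x₃ + a^2*b - a^2*β*ξ₃) - (a^2*x₁ + a^2*b - a^2*β*ξ₁)
        - (a*β + a*ξ₃) * (a*β + a*ξ₁) = a^2 * (x₃ - x₁ - ξ₃*ξ₁))
    ∧ ((a^2*x₃ + a^2*b - a^2*β*ξ₃) - (a^2*x₂ + a^2*b - a^2*β*ξ₂)
        - (a*β + a*ξ₃) * (a*β + a*ξ₂) = a^2 * (x₃ - x₂ - ξ₃*ξ₂)) := by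
  have h12 := sc.superBracket_superAffine b ha hβ (x₁, ξ₁) (x₂, ξ₂) hξ₂
  have h13 := sc.superBracket_superAffine b ha hβ (x₁, ξ₁) (x₃, ξ₃) hξ₃
  have h23 := sc.superBracket_superAffine b ha hβ (x₂, ξ₂) (x₃, ξ₃) hξ₃
  set d₁₂ := superBracket (x₁, ξ₁) (x₂, ξ₂)
  set d₁₃ := superBracket (x₁, ξ₁) (x₃, ξ₃)
  have hcomm : d₁₂ * d₁₃ = d₁₃ * d₁₂ :=
    sc.ev_central _ (sc.ev_superBracket (s := (x₁, ξ₁)) (t := (x₂, ξ₂)) hx₁ hξ₁ hx₂ hξ₂) _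
  refine ⟨?_, h12, h13, h23⟩
  calc _ = a ^ 2 * d₁₃ * d₁₂ := congrArg (· * _) h13
    _ = a ^ 2 * d₁₂ * d₁₃ := by rw [mul_assoc, ← hcomm, mul_assoc]
    _ = _ := (congrArg (· * _) h12).symm

/-- the super affine transformation
`G(x,ξ) = (a²x + a²b - a²βξ, aβ + aξ)` (with `a` an invertible even element,
`b` even, `β` odd) satisfies `[G(t₁),G(t₃)]·[t₁,t₂] = [G(t₁),G(t₂)]·[t₁,t₃]`,
and in particular `[G(tᵢ),G(tⱼ)] = a²·[tᵢ,tⱼ]` for all pairs, where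
`[tᵢ,tⱼ] = xⱼ - xᵢ - ξⱼξᵢ`. -/
theorem super_affine_invariance
    {A : Type*} [Ring A] (sc : SuperComm A)
    (a b β x₁ ξ₁ x₂ ξ₂ x₃ ξ₃ : A)
    (ha : sc.Ev a) (haunit : IsUnit a) (hb : sc.Ev b) (hβ : sc.Od β)
    (hx₁ : sc.Ev x₁) (hξ₁ : sc.Od ξ₁)
    (hx₂ : sc.Ev x₂) (hξ₂ : sc.Od ξ₂)
    (hx₃ : sc.Ev x₃) (hξ₃ : sc.Od ξ₃) :
    (((a^2*x₃ + a^2*b - a^2*β*ξ₃) - (a^2*x₁ + a^2*b - a^2*β*ξ₁)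
        - (a*β + a*ξ₃) * (a*β + a*ξ₁)) * (x₂ - x₁ - ξ₂*ξ₁)
      = ((a^2*x₂ + a^2*b - a^2*β*ξ₂) - (a^2*x₁ + a^2*b - a^2*β*ξ₁)
        - (a*β + a*ξ₂) * (a*β + a*ξ₁)) * (x₃ - x₁ - ξ₃*ξ₁))
    ∧ ((a^2*x₂ + a^2*b - a^2*β*ξ₂) - (a^2*x₁ + a^2*b - a^2*β*ξ₁)
        - (a*β + a*ξ₂) * (a*β + a*ξ₁) = a^2 * (x₂ - x₁ - ξ₂*ξ₁))
    ∧ ((a^2*x₃ + a^2*b - a^2*β*ξ₃) - (a^2*x₁ + a^2*b - a^2*β*ξ₁)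
        - (a*β + a*ξ₃) * (a*β + a*ξ₁) = a^2 * (x₃ - x₁ - ξ₃*ξ₁))
    ∧ ((a^2*x₃ + a^2*b - a^2*β*ξ₃) - (a^2*x₂ + a^2*b - a^2*β*ξ₂)
        - (a*β + a*ξ₃) * (a*β + a*ξ₂) = a^2 * (x₃ - x₂ - ξ₃*ξ₂)) :=
  super_affine_invariance_general sc a b β x₁ ξ₁ x₂ ξ₂ x₃ ξ₃ ha hβ hx₁ hξ₁ hx₂ hξ₂ hξ₃
end

section
/- Let A be a supercommutative ring, and let a,b,c,d,e be even and α,β,γ,δ odd elements satisfying the orthosymplectic relations ad − bc − αβ = 1, e² + 2γδ = 1, αe − aδ + cγ = 0, βe − bδ + dγ = 0. For a point t = (x,ξ) (x even, ξ odd) with cx + d + δξ invertible, define ĥ(t) = ((ax+b+γξ)/(cx+d+δξ), (αx+β+eξ)/(cx+d+δξ)). Then for any two points t₁, t₂ with invertible denominators Dᵢ = cxᵢ + d + δξᵢ, one has [ĥ(t₁), ĥ(t₂)]·D₁·D₂ = [t₁,t₂], where [t₁,t₂] = x₂ − x₁ − ξ₂ξ₁. -/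
/-- The even Euclidean invariant `[t₁,t₂] = x₂ - x₁ - ξ₂ξ₁` of two points
`tᵢ = (xᵢ, ξᵢ)` of the supercircle. -/
def ebr {A : Type*} [Ring A] (t₁ t₂ : A × A) : A :=
  t₂.1 - t₁.1 - t₂.2 * t₁.2

/-- The homographic (superfractional-linear) action of an orthosymplectic
matrix with entries `a b c d e` (even) and `α β γ δ` (odd), where `Dinv` is an
inverse of the denominator `c·x + d + δ·ξ` at the point `t = (x, ξ)`. -/
def hmap {A : Type*} [Ring A] (a b e α β γ : A) (Dinv : A) (t : A × A) : A × A :=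
  ((a * t.1 + b + γ * t.2) * Dinv, (α * t.1 + β + e * t.2) * Dinv)

theorem ebr_mul_inv_mul_mul {A : Type*} [Ring A] {N₁ M₁ N₂ M₂ u₁ u₂ v₁ v₂ : A}
    (hv₁ : v₁ * u₁ = 1) (hv₂ : v₂ * u₂ = 1) (hu₁ : Commute v₂ u₁) (hM₁ : Commute v₂ M₁) :
    ebr (N₁ * v₁, M₁ * v₁) (N₂ * v₂, M₂ * v₂) * u₁ * u₂ = N₂ * u₁ - N₁ * u₂ - M₂ * M₁ := by
  calc ebr (N₁ * v₁, M₁ * v₁) (N₂ * v₂, M₂ * v₂) * u₁ * u₂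
      = N₂ * (v₂ * u₁) * u₂ - N₁ * (v₁ * u₁) * u₂ - M₂ * (v₂ * M₁) * (v₁ * u₁) * u₂ := by
        simp only [ebr]; noncomm_ring
    _ = (N₂ * u₁ - M₂ * M₁) * (v₂ * u₂) - N₁ * u₂ := by
        rw [hv₁, hu₁.eq, hM₁.eq]; noncomm_ring
    _ = N₂ * u₁ - N₁ * u₂ - M₂ * M₁ := by rw [hv₂, mul_one]; noncomm_ring

namespace SuperComm

variable {A : Type*} [Ring A] (sc : SuperComm A)

theorem commute_of_ev {u : A} (hu : sc.Ev u) (z : A) : Commute u z :=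
  sc.ev_central u hu z

theorem od_mul_ev_add {α β x : A} (hα : sc.Od α) (hβ : sc.Od β) (hx : sc.Ev x) :
    sc.Od (α * x + β) := by
  rw [← (sc.commute_of_ev hx α).eq]
  exact sc.od_add _ _ (sc.ev_mul_od x α hx hα) hβ

theorem commute_of_mul_eq_one {u v : A} (hu : sc.Ev u) (huv : u * v = 1) (hvu : v * u = 1)
    (z : A) : Commute v z :=
  (sc.commute_of_ev hu z).units_inv_left (u := ⟨u, v, huv, hvu⟩)

theorem ev_mul_add {c d x : A} (hc : sc.Ev c) (hd : sc.Ev d) (hx : sc.Ev x) :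
    sc.Ev (c * x + d) :=
  sc.ev_add _ _ (sc.ev_mul_ev _ _ hc hx) hd

variable {a b c d e α β γ δ x₁ x₂ ξ₁ ξ₂ : A}

theorem orthosymplectic_odd_relation {x : A} (hx : sc.Ev x)
    (rel₃ : α * e - a * δ + c * γ = 0) (rel₄ : β * e - b * δ + d * γ = 0) :
    (a * x + b) * δ - (c * x + d) * γ - (α * x + β) * e = 0 := by
  linear_combination (norm := noncomm_ring)
    -(x * rel₃) - rel₄ - (sc.commute_of_ev hx a).eq * δ + (sc.commute_of_ev hx c).eq * γ
      + (sc.commute_of_ev hx α).eq * e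

theorem cross_even (hx₁ : sc.Ev x₁) (hx₂ : sc.Ev x₂) (hα : sc.Od α) (hβ : sc.Od β)
    (rel₁ : a * d - b * c - α * β = 1) :
    (a * x₂ + b) * (c * x₁ + d) - (a * x₁ + b) * (c * x₂ + d) - (α * x₂ + β) * (α * x₁ + β)
      = x₂ - x₁ := by
  have h_ev : (a * x₂ + b) * (c * x₁ + d) - (a * x₁ + b) * (c * x₂ + d)
      = (a * d - b * c) * (x₂ - x₁) := by
    linear_combination (norm := noncomm_ring)
      a * (sc.commute_of_ev hx₂ (c * x₁)).eq - a * (sc.commute_of_ev hx₁ c).eq * x₂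
        + a * (sc.commute_of_ev hx₂ d).eq - a * (sc.commute_of_ev hx₁ d).eq
  have h_od : (α * x₂ + β) * (α * x₁ + β) = α * β * (x₂ - x₁) := by
    linear_combination (norm := noncomm_ring)
      α * (sc.commute_of_ev hx₂ α).eq * x₁ + sc.od_sq α hα * x₂ * x₁
        + sc.od_anticomm β α hβ hα * x₁ + α * (sc.commute_of_ev hx₂ β).eq + sc.od_sq β hβ
  linear_combination (norm := noncomm_ring) h_ev - h_od + rel₁ * (x₂ - x₁)

theorem cross_xi₁ (hc : sc.Ev c) (hd : sc.Ev d) (hx₂ : sc.Ev x₂)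
    (rel₃ : α * e - a * δ + c * γ = 0) (rel₄ : β * e - b * δ + d * γ = 0) :
    (a * x₂ + b) * (δ * ξ₁) - γ * ξ₁ * (c * x₂ + d) - (α * x₂ + β) * (e * ξ₁) = 0 := by
  linear_combination (norm := noncomm_ring)
    sc.orthosymplectic_odd_relation hx₂ rel₃ rel₄ * ξ₁
      + (sc.commute_of_ev (sc.ev_mul_add hc hd hx₂) (γ * ξ₁)).eq

theorem cross_xi₂ (hc : sc.Ev c) (hd : sc.Ev d) (he : sc.Ev e) (hα : sc.Od α) (hβ : sc.Od β)
    (hx₁ : sc.Ev x₁) (hξ₂ : sc.Od ξ₂)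
    (rel₃ : α * e - a * δ + c * γ = 0) (rel₄ : β * e - b * δ + d * γ = 0) :
    γ * ξ₂ * (c * x₁ + d) - (a * x₁ + b) * (δ * ξ₂) - e * ξ₂ * (α * x₁ + β) = 0 := by
  linear_combination (norm := noncomm_ring)
    -(sc.orthosymplectic_odd_relation hx₁ rel₃ rel₄ * ξ₂)
      - (sc.commute_of_ev (sc.ev_mul_add hc hd hx₁) (γ * ξ₂)).eq
      - e * sc.od_anticomm ξ₂ _ hξ₂ (sc.od_mul_ev_add hα hβ hx₁)
      + (sc.commute_of_ev he (α * x₁ + β)).eq * ξ₂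

theorem cross_xi₂_xi₁ (he : sc.Ev e) (hδ : sc.Od δ) (hξ₁ : sc.Od ξ₁) (hξ₂ : sc.Od ξ₂)
    (rel₂ : e * e + 2 * (γ * δ) = 1) :
    γ * ξ₂ * (δ * ξ₁) - γ * ξ₁ * (δ * ξ₂) - e * ξ₂ * (e * ξ₁) = -(ξ₂ * ξ₁) := by
  linear_combination (norm := noncomm_ring)
    γ * sc.od_anticomm ξ₂ δ hξ₂ hδ * ξ₁ - γ * sc.od_anticomm ξ₁ δ hξ₁ hδ * ξ₂
      + γ * δ * sc.od_anticomm ξ₁ ξ₂ hξ₁ hξ₂ + e * (sc.commute_of_ev he ξ₂).eq * ξ₁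
      - rel₂ * (ξ₂ * ξ₁)

theorem cross_eq_ebr (hc : sc.Ev c) (hd : sc.Ev d) (he : sc.Ev e) (hα : sc.Od α)
    (hβ : sc.Od β) (hδ : sc.Od δ) (hx₁ : sc.Ev x₁) (hξ₁ : sc.Od ξ₁) (hx₂ : sc.Ev x₂)
    (hξ₂ : sc.Od ξ₂) (rel₁ : a * d - b * c - α * β = 1) (rel₂ : e * e + 2 * (γ * δ) = 1)
    (rel₃ : α * e - a * δ + c * γ = 0) (rel₄ : β * e - b * δ + d * γ = 0) :
    (a * x₂ + b + γ * ξ₂) * (c * x₁ + d + δ * ξ₁) - (a * x₁ + b + γ * ξ₁) * (c * x₂ + d + δ * ξ₂)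
        - (α * x₂ + β + e * ξ₂) * (α * x₁ + β + e * ξ₁)
      = x₂ - x₁ - ξ₂ * ξ₁ := by
  linear_combination (norm := noncomm_ring)
    sc.cross_even hx₁ hx₂ hα hβ rel₁ + sc.cross_xi₁ (ξ₁ := ξ₁) hc hd hx₂ rel₃ rel₄
      + sc.cross_xi₂ hc hd he hα hβ hx₁ hξ₂ rel₃ rel₄
      + sc.cross_xi₂_xi₁ (γ := γ) he hδ hξ₁ hξ₂ rel₂

end SuperComm

theorem spo_homography_euclidean_transformation_general
    {A : Type*} [Ring A] (sc : SuperComm A)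
    (a b c d e α β γ δ : A)
    (hc : sc.Ev c) (hd : sc.Ev d) (he : sc.Ev e)
    (hα : sc.Od α) (hβ : sc.Od β) (hδ : sc.Od δ)
    (rel₁ : a * d - b * c - α * β = 1)
    (rel₂ : e * e + 2 * (γ * δ) = 1)
    (rel₃ : α * e - a * δ + c * γ = 0)
    (rel₄ : β * e - b * δ + d * γ = 0)
    (t₁ t₂ : A × A)
    (hx₁ : sc.Ev t₁.1) (hξ₁ : sc.Od t₁.2)
    (hx₂ : sc.Ev t₂.1) (hξ₂ : sc.Od t₂.2)
    (D₁inv D₂inv : A)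
    (hD₁ : (c * t₁.1 + d + δ * t₁.2) * D₁inv = 1
         ∧ D₁inv * (c * t₁.1 + d + δ * t₁.2) = 1)
    (hD₂ : (c * t₂.1 + d + δ * t₂.2) * D₂inv = 1
         ∧ D₂inv * (c * t₂.1 + d + δ * t₂.2) = 1) :
    ebr (hmap a b e α β γ D₁inv t₁) (hmap a b e α β γ D₂inv t₂)
        * (c * t₁.1 + d + δ * t₁.2) * (c * t₂.1 + d + δ * t₂.2)
      = ebr t₁ t₂ := by
  have hD₂inv : ∀ z, Commute D₂inv z := sc.commute_of_mul_eq_one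
    (sc.ev_add _ _ (sc.ev_mul_add hc hd hx₂) (sc.od_mul_od _ _ hδ hξ₂)) hD₂.1 hD₂.2
  rw [hmap, hmap, ebr_mul_inv_mul_mul hD₁.2 hD₂.2 (hD₂inv _) (hD₂inv _)]
  exact sc.cross_eq_ebr hc hd he hα hβ hδ hx₁ hξ₁ hx₂ hξ₂ rel₁ rel₂ rel₃ rel₄

/-- transformation law of the even Euclidean invariant under an
orthosymplectic homography `ĥ` of `S^{1|1}`:
`[ĥ(t₁),ĥ(t₂)]·D₁·D₂ = [t₁,t₂]` where `Dᵢ = c·xᵢ + d + δ·ξᵢ` is invertible. -/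
theorem spo_homography_euclidean_transformation
    {A : Type*} [Ring A] (sc : SuperComm A)
    (a b c d e α β γ δ : A)
    (ha : sc.Ev a) (hb : sc.Ev b) (hc : sc.Ev c) (hd : sc.Ev d) (he : sc.Ev e)
    (hα : sc.Od α) (hβ : sc.Od β) (hγ : sc.Od γ) (hδ : sc.Od δ)
    (rel₁ : a * d - b * c - α * β = 1)
    (rel₂ : e * e + 2 * (γ * δ) = 1)
    (rel₃ : α * e - a * δ + c * γ = 0)
    (rel₄ : β * e - b * δ + d * γ = 0)
    (t₁ t₂ : A × A)
    (hx₁ : sc.Ev t₁.1) (hξ₁ : sc.Od t₁.2)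
    (hx₂ : sc.Ev t₂.1) (hξ₂ : sc.Od t₂.2)
    (D₁inv D₂inv : A)
    (hD₁ : (c * t₁.1 + d + δ * t₁.2) * D₁inv = 1
         ∧ D₁inv * (c * t₁.1 + d + δ * t₁.2) = 1)
    (hD₂ : (c * t₂.1 + d + δ * t₂.2) * D₂inv = 1
         ∧ D₂inv * (c * t₂.1 + d + δ * t₂.2) = 1) :
    ebr (hmap a b e α β γ D₁inv t₁) (hmap a b e α β γ D₂inv t₂)
        * (c * t₁.1 + d + δ * t₁.2) * (c * t₂.1 + d + δ * t₂.2)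
      = ebr t₁ t₂ :=
  spo_homography_euclidean_transformation_general sc a b c d e α β γ δ hc hd he hα hβ hδ rel₁ rel₂
    rel₃ rel₄ t₁ t₂ hx₁ hξ₁ hx₂ hξ₂ D₁inv D₂inv hD₁ hD₂
end

section
/- With the same hypotheses as the transformation law for homographies (orthosymplectic relations, four points t₁,…,t₄ with invertible denominators Dᵢ = cxᵢ + d + δξᵢ), the even cross-ratio is invariant: [ĥ(t₁),ĥ(t₃)]·[ĥ(t₂),ĥ(t₄)]·[t₂,t₃]·[t₁,t₄] = [ĥ(t₂),ĥ(t₃)]·[ĥ(t₁),ĥ(t₄)]·[t₁,t₃]·[t₂,t₄]. -/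
theorem inv_mem_center_of_mul_eq_one {A : Type*} [Ring A] {D D' : A}
    (hD : D ∈ Subring.center A) (h₁ : D * D' = 1) (h₂ : D' * D = 1) :
    D' ∈ Subring.center A :=
  Set.units_inv_mem_center (a := ⟨D, D', h₁, h₂⟩) hD

theorem sub_sub_mul_eq_of_mem_center {A : Type*} [Ring A] {P Q R S D₁ D₂ D₁' D₂' : A}
    (hD₁' : D₁' ∈ Subring.center A) (hD₂' : D₂' ∈ Subring.center A)
    (h₁ : D₁ * D₁' = 1) (h₂ : D₂ * D₂' = 1) :
    Q * D₂' - P * D₁' - (S * D₂') * (R * D₁') = (Q * D₁ - P * D₂ - S * R) * (D₁' * D₂') := by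
  have comm₁ := Subring.mem_center_iff.1 hD₁'
  have comm₂ := Subring.mem_center_iff.1 hD₂'
  have hQ : Q * D₁ * (D₁' * D₂') = Q * D₂' := by
    rw [mul_assoc, ← mul_assoc D₁, h₁, one_mul]
  have hP : P * D₂ * (D₁' * D₂') = P * D₁' := by
    rw [← comm₁ D₂', mul_assoc, ← mul_assoc D₂, h₂, one_mul]
  have hSR : S * R * (D₁' * D₂') = (S * D₂') * (R * D₁') := by
    rw [← comm₁ D₂', mul_assoc, ← mul_assoc R, comm₂ R, mul_assoc, ← mul_assoc S]
  rw [sub_mul, sub_mul, hQ, hP, hSR]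

theorem cross_ratio_identity_of_mem_center {A : Type*} [Ring A] {r₁₃ r₂₄ r₂₃ r₁₄ u₁ u₂ u₃ u₄ : A}
    (h₁₃ : r₁₃ ∈ Subring.center A) (h₂₄ : r₂₄ ∈ Subring.center A)
    (h₂₃ : r₂₃ ∈ Subring.center A) (h₁₄ : r₁₄ ∈ Subring.center A)
    (hu₁ : u₁ ∈ Subring.center A) (hu₂ : u₂ ∈ Subring.center A)
    (hu₃ : u₃ ∈ Subring.center A) (hu₄ : u₄ ∈ Subring.center A) :
    r₁₃ * (u₁ * u₃) * (r₂₄ * (u₂ * u₄)) * r₂₃ * r₁₄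
      = r₂₃ * (u₂ * u₃) * (r₁₄ * (u₁ * u₄)) * r₁₃ * r₂₄ := by
  lift r₁₃ to Subring.center A using h₁₃
  lift r₂₄ to Subring.center A using h₂₄
  lift r₂₃ to Subring.center A using h₂₃
  lift r₁₄ to Subring.center A using h₁₄
  lift u₁ to Subring.center A using hu₁
  lift u₂ to Subring.center A using hu₂
  lift u₃ to Subring.center A using hu₃
  lift u₄ to Subring.center A using hu₄
  norm_cast
  ring

namespace SuperComm

variable {A : Type*} [Ring A] (sc : SuperComm A)

theorem mem_center_of_ev {u : A} (hu : sc.Ev u) : u ∈ Subring.center A :=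
  Subring.mem_center_iff.2 fun g => (sc.ev_central u hu g).symm

theorem ev_ebr {t₁ t₂ : A × A} (hx₁ : sc.Ev t₁.1) (hξ₁ : sc.Od t₁.2) (hx₂ : sc.Ev t₂.1)
    (hξ₂ : sc.Od t₂.2) : sc.Ev (ebr t₁ t₂) :=
  sc.ev_sub (sc.ev_sub hx₂ hx₁) (sc.od_mul_od _ _ hξ₂ hξ₁)

theorem ev_denom {c d δ : A} (hc : sc.Ev c) (hd : sc.Ev d) (hδ : sc.Od δ) {t : A × A}
    (hx : sc.Ev t.1) (hξ : sc.Od t.2) : sc.Ev (c * t.1 + d + δ * t.2) :=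
  sc.ev_add _ _ (sc.ev_add _ _ (sc.ev_mul_ev _ _ hc hx) hd) (sc.od_mul_od _ _ hδ hξ)

theorem od_mul_od_left_comm {u v : A} (hu : sc.Od u) (hv : sc.Od v) (z : A) :
    u * (v * z) = -(v * (u * z)) := by
  rw [← mul_assoc, sc.od_anticomm u v hu hv, neg_mul, mul_assoc]

theorem homography_numerator (a b c d e x y α β γ δ ξ η : A)
    (hc : sc.Ev c) (hd : sc.Ev d) (he : sc.Ev e) (hx : sc.Ev x) (hy : sc.Ev y)
    (hα : sc.Od α) (hβ : sc.Od β) (hγ : sc.Od γ) (hδ : sc.Od δ) (hξ : sc.Od ξ) (hη : sc.Od η) :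
    (a * y + b + γ * η) * (c * x + d + δ * ξ) - (a * x + b + γ * ξ) * (c * y + d + δ * η)
      - (α * y + β + e * η) * (α * x + β + e * ξ)
    = (a * d - b * c - α * β) * (y - x) + (a * δ - e * α - c * γ) * (y * ξ - x * η)
      + (b * δ - e * β - d * γ) * (ξ - η) - (e * e + 2 * (γ * δ)) * (η * ξ) := by
  -- The parity side conditions only steer `simp`: even factors are sorted among themselves
  -- and moved to the left of odd ones, so the rewriting terminates.
  have ev_comm : ∀ u v : A, sc.Ev u → sc.Ev v → u * v = v * u :=
    fun u v hu _ => sc.ev_central u hu v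
  have ev_left_comm : ∀ u v z : A, sc.Ev u → sc.Ev v → u * (v * z) = v * (u * z) :=
    fun u v z hu _ => by rw [← mul_assoc, sc.ev_central u hu v, mul_assoc]
  have od_ev_comm : ∀ u v : A, sc.Od u → sc.Ev v → u * v = v * u :=
    fun u v _ hv => (sc.ev_central v hv u).symm
  have od_ev_left_comm : ∀ u v z : A, sc.Od u → sc.Ev v → u * (v * z) = v * (u * z) :=
    fun u v z _ hv => by rw [← mul_assoc, (sc.ev_central v hv u).symm, mul_assoc]
  simp only [mul_add, add_mul, mul_sub, sub_mul, mul_assoc, two_mul, ev_comm, ev_left_comm,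
    od_ev_comm, od_ev_left_comm, hc, hd, he, hx, hy, hα, hβ, hγ, hδ, hξ, hη]
  simp only [sc.od_anticomm β α hβ hα, sc.od_anticomm η α hη hα, sc.od_anticomm η β hη hβ,
    sc.od_anticomm ξ η hξ hη, sc.od_mul_od_left_comm hη hδ, sc.od_mul_od_left_comm hξ hδ,
    sc.od_sq α hα, sc.od_sq β hβ, mul_neg, neg_neg, mul_zero]
  abel

theorem inv_denom_mem_center {c d δ : A} (hc : sc.Ev c) (hd : sc.Ev d) (hδ : sc.Od δ)
    {t : A × A} (hx : sc.Ev t.1) (hξ : sc.Od t.2) {D' : A}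
    (hD : (c * t.1 + d + δ * t.2) * D' = 1 ∧ D' * (c * t.1 + d + δ * t.2) = 1) :
    D' ∈ Subring.center A :=
  inv_mem_center_of_mul_eq_one (sc.mem_center_of_ev (sc.ev_denom hc hd hδ hx hξ)) hD.1 hD.2

theorem homography_numerator_of_spo {a b c d e α β γ δ : A} (hc : sc.Ev c) (hd : sc.Ev d)
    (he : sc.Ev e) (hα : sc.Od α) (hβ : sc.Od β) (hγ : sc.Od γ) (hδ : sc.Od δ)
    (rel₁ : a * d - b * c - α * β = 1) (rel₂ : e * e + 2 * (γ * δ) = 1)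
    (rel₃ : α * e - a * δ + c * γ = 0) (rel₄ : β * e - b * δ + d * γ = 0)
    {x y ξ η : A} (hx : sc.Ev x) (hy : sc.Ev y) (hξ : sc.Od ξ) (hη : sc.Od η) :
    (a * y + b + γ * η) * (c * x + d + δ * ξ) - (a * x + b + γ * ξ) * (c * y + d + δ * η)
      - (α * y + β + e * η) * (α * x + β + e * ξ)
    = y - x - η * ξ := by
  have rel₃' : a * δ - e * α - c * γ = 0 := by
    rw [← neg_eq_zero, ← rel₃, sc.ev_central e he α]; abel
  have rel₄' : b * δ - e * β - d * γ = 0 := by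
    rw [← neg_eq_zero, ← rel₄, sc.ev_central e he β]; abel
  rw [sc.homography_numerator a b c d e x y α β γ δ ξ η hc hd he hx hy hα hβ hγ hδ hξ hη,
    rel₁, rel₂, rel₃', rel₄', one_mul, one_mul, zero_mul, zero_mul, add_zero, add_zero]

theorem ebr_hmap {a b c d e α β γ δ : A} (hc : sc.Ev c) (hd : sc.Ev d) (he : sc.Ev e)
    (hα : sc.Od α) (hβ : sc.Od β) (hγ : sc.Od γ) (hδ : sc.Od δ)
    (rel₁ : a * d - b * c - α * β = 1) (rel₂ : e * e + 2 * (γ * δ) = 1)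
    (rel₃ : α * e - a * δ + c * γ = 0) (rel₄ : β * e - b * δ + d * γ = 0)
    {t₁ t₂ : A × A} (hx₁ : sc.Ev t₁.1) (hξ₁ : sc.Od t₁.2)
    (hx₂ : sc.Ev t₂.1) (hξ₂ : sc.Od t₂.2) {D₁' D₂' : A}
    (hD₁ : (c * t₁.1 + d + δ * t₁.2) * D₁' = 1 ∧ D₁' * (c * t₁.1 + d + δ * t₁.2) = 1)
    (hD₂ : (c * t₂.1 + d + δ * t₂.2) * D₂' = 1 ∧ D₂' * (c * t₂.1 + d + δ * t₂.2) = 1) :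
    ebr (hmap a b e α β γ D₁' t₁) (hmap a b e α β γ D₂' t₂) = ebr t₁ t₂ * (D₁' * D₂') := by
  rw [ebr, ebr, hmap, hmap,
    sub_sub_mul_eq_of_mem_center (sc.inv_denom_mem_center hc hd hδ hx₁ hξ₁ hD₁)
      (sc.inv_denom_mem_center hc hd hδ hx₂ hξ₂ hD₂) hD₁.1 hD₂.1,
    sc.homography_numerator_of_spo hc hd he hα hβ hγ hδ rel₁ rel₂ rel₃ rel₄ hx₁ hx₂ hξ₁ hξ₂]

end SuperComm

theorem spo_homography_cross_ratio_invariance_general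
    {A : Type*} [Ring A] (sc : SuperComm A)
    (a b c d e α β γ δ : A)
    (hc : sc.Ev c) (hd : sc.Ev d) (he : sc.Ev e)
    (hα : sc.Od α) (hβ : sc.Od β) (hγ : sc.Od γ) (hδ : sc.Od δ)
    (rel₁ : a * d - b * c - α * β = 1)
    (rel₂ : e * e + 2 * (γ * δ) = 1)
    (rel₃ : α * e - a * δ + c * γ = 0)
    (rel₄ : β * e - b * δ + d * γ = 0)
    (t₁ t₂ t₃ t₄ : A × A)
    (hx₁ : sc.Ev t₁.1) (hξ₁ : sc.Od t₁.2)
    (hx₂ : sc.Ev t₂.1) (hξ₂ : sc.Od t₂.2)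
    (hx₃ : sc.Ev t₃.1) (hξ₃ : sc.Od t₃.2)
    (hx₄ : sc.Ev t₄.1) (hξ₄ : sc.Od t₄.2)
    (D₁inv D₂inv D₃inv D₄inv : A)
    (hD₁ : (c * t₁.1 + d + δ * t₁.2) * D₁inv = 1
         ∧ D₁inv * (c * t₁.1 + d + δ * t₁.2) = 1)
    (hD₂ : (c * t₂.1 + d + δ * t₂.2) * D₂inv = 1
         ∧ D₂inv * (c * t₂.1 + d + δ * t₂.2) = 1)
    (hD₃ : (c * t₃.1 + d + δ * t₃.2) * D₃inv = 1
         ∧ D₃inv * (c * t₃.1 + d + δ * t₃.2) = 1)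
    (hD₄ : (c * t₄.1 + d + δ * t₄.2) * D₄inv = 1
         ∧ D₄inv * (c * t₄.1 + d + δ * t₄.2) = 1) :
    ebr (hmap a b e α β γ D₁inv t₁) (hmap a b e α β γ D₃inv t₃)
      * ebr (hmap a b e α β γ D₂inv t₂) (hmap a b e α β γ D₄inv t₄)
      * ebr t₂ t₃ * ebr t₁ t₄
    = ebr (hmap a b e α β γ D₂inv t₂) (hmap a b e α β γ D₃inv t₃)
      * ebr (hmap a b e α β γ D₁inv t₁) (hmap a b e α β γ D₄inv t₄)
      * ebr t₁ t₃ * ebr t₂ t₄ := by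
  rw [sc.ebr_hmap hc hd he hα hβ hγ hδ rel₁ rel₂ rel₃ rel₄ hx₁ hξ₁ hx₃ hξ₃ hD₁ hD₃,
    sc.ebr_hmap hc hd he hα hβ hγ hδ rel₁ rel₂ rel₃ rel₄ hx₂ hξ₂ hx₄ hξ₄ hD₂ hD₄,
    sc.ebr_hmap hc hd he hα hβ hγ hδ rel₁ rel₂ rel₃ rel₄ hx₂ hξ₂ hx₃ hξ₃ hD₂ hD₃,
    sc.ebr_hmap hc hd he hα hβ hγ hδ rel₁ rel₂ rel₃ rel₄ hx₁ hξ₁ hx₄ hξ₄ hD₁ hD₄]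
  exact cross_ratio_identity_of_mem_center
    (sc.mem_center_of_ev (sc.ev_ebr hx₁ hξ₁ hx₃ hξ₃))
    (sc.mem_center_of_ev (sc.ev_ebr hx₂ hξ₂ hx₄ hξ₄))
    (sc.mem_center_of_ev (sc.ev_ebr hx₂ hξ₂ hx₃ hξ₃))
    (sc.mem_center_of_ev (sc.ev_ebr hx₁ hξ₁ hx₄ hξ₄))
    (sc.inv_denom_mem_center hc hd hδ hx₁ hξ₁ hD₁) (sc.inv_denom_mem_center hc hd hδ hx₂ hξ₂ hD₂)
    (sc.inv_denom_mem_center hc hd hδ hx₃ hξ₃ hD₃) (sc.inv_denom_mem_center hc hd hδ hx₄ hξ₄ hD₄)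

/-- the even super cross-ratio is invariant under orthosymplectic
homographies, in denominator-free form:
`[ĥ(t₁),ĥ(t₃)]·[ĥ(t₂),ĥ(t₄)]·[t₂,t₃]·[t₁,t₄] = [ĥ(t₂),ĥ(t₃)]·[ĥ(t₁),ĥ(t₄)]·[t₁,t₃]·[t₂,t₄]`. -/
theorem spo_homography_cross_ratio_invariance
    {A : Type*} [Ring A] (sc : SuperComm A)
    (a b c d e α β γ δ : A)
    (ha : sc.Ev a) (hb : sc.Ev b) (hc : sc.Ev c) (hd : sc.Ev d) (he : sc.Ev e)
    (hα : sc.Od α) (hβ : sc.Od β) (hγ : sc.Od γ) (hδ : sc.Od δ)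
    (rel₁ : a * d - b * c - α * β = 1)
    (rel₂ : e * e + 2 * (γ * δ) = 1)
    (rel₃ : α * e - a * δ + c * γ = 0)
    (rel₄ : β * e - b * δ + d * γ = 0)
    (t₁ t₂ t₃ t₄ : A × A)
    (hx₁ : sc.Ev t₁.1) (hξ₁ : sc.Od t₁.2)
    (hx₂ : sc.Ev t₂.1) (hξ₂ : sc.Od t₂.2)
    (hx₃ : sc.Ev t₃.1) (hξ₃ : sc.Od t₃.2)
    (hx₄ : sc.Ev t₄.1) (hξ₄ : sc.Od t₄.2)
    (D₁inv D₂inv D₃inv D₄inv : A)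
    (hD₁ : (c * t₁.1 + d + δ * t₁.2) * D₁inv = 1
         ∧ D₁inv * (c * t₁.1 + d + δ * t₁.2) = 1)
    (hD₂ : (c * t₂.1 + d + δ * t₂.2) * D₂inv = 1
         ∧ D₂inv * (c * t₂.1 + d + δ * t₂.2) = 1)
    (hD₃ : (c * t₃.1 + d + δ * t₃.2) * D₃inv = 1
         ∧ D₃inv * (c * t₃.1 + d + δ * t₃.2) = 1)
    (hD₄ : (c * t₄.1 + d + δ * t₄.2) * D₄inv = 1
         ∧ D₄inv * (c * t₄.1 + d + δ * t₄.2) = 1) :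
    ebr (hmap a b e α β γ D₁inv t₁) (hmap a b e α β γ D₃inv t₃)
      * ebr (hmap a b e α β γ D₂inv t₂) (hmap a b e α β γ D₄inv t₄)
      * ebr t₂ t₃ * ebr t₁ t₄
    = ebr (hmap a b e α β γ D₂inv t₂) (hmap a b e α β γ D₃inv t₃)
      * ebr (hmap a b e α β γ D₁inv t₁) (hmap a b e α β γ D₄inv t₄)
      * ebr t₁ t₃ * ebr t₂ t₄ :=
  spo_homography_cross_ratio_invariance_general sc a b c d e α β γ δ hc hd he hα hβ hγ hδ rel₁ rel₂
    rel₃ rel₄ t₁ t₂ t₃ t₄ hx₁ hξ₁ hx₂ hξ₂ hx₃ hξ₃ hx₄ hξ₄ D₁inv D₂inv D₃inv D₄inv hD₁ hD₂ hD₃ hD₄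
end
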